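/- Let Q be a quiver and Q̂ its universal abelian covering quiver. If Q̂ contains a reduced unoriented cycle, then the minimal length of a reduced unoriented cycle in Q is strictly smaller than the minimal length of a reduced unoriented cycle in Q̂. -/

import Mathlib

/-- A quiver: a set of vertices, a set of arrows, and source/target maps. -/
structure Quiv where
  V : Type
  A : Type
  s : A → V
  t : A → V

namespace Quiv

variable (Q : Quiv)

/-- A step in the double quiver of `Q`: an arrow together with an orientation
(`true` = the arrow itself, `false` = its formal inverse). -/
abbrev Step := Q.A × Bool

/-- Source of a step of the double quiver. -/
def src (e : Q.Step) : Q.V := if e.2 then Q.s e.1 else Q.t e.1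

/-- Target of a step of the double quiver. -/
def tgt (e : Q.Step) : Q.V := if e.2 then Q.t e.1 else Q.s e.1

/-- `Q.IsWalk i j l` : the list of steps `l` is an unoriented path
(a path in the double quiver) from `i` to `j`. -/
def IsWalk : Q.V → Q.V → List Q.Step → Prop
  | i, j, [] => i = j
  | i, j, e :: l => Q.src e = i ∧ IsWalk (Q.tgt e) j l

/-- A quiver is connected if any two vertices are joined by an unoriented path. -/
def Connected : Prop := ∀ i j : Q.V, ∃ l, Q.IsWalk i j l

/-- An unoriented path is reduced if it has positive length and contains no
subword of the form `α α⁻¹` or `α⁻¹ α`. -/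
def Reduced (l : List Q.Step) : Prop :=
  l ≠ [] ∧ l.Chain' fun e f => ¬(e.1 = f.1 ∧ e.2 = !f.2)

/-- A quiver is tree-shaped if it is connected and has no reduced unoriented cycles. -/
def TreeShaped : Prop :=
  Q.Connected ∧ ∀ (i : Q.V) (l : List Q.Step), Q.IsWalk i i l → ¬ Q.Reduced l

end Quiv

/-- A morphism of quivers. -/
structure QuivHom (C Q : Quiv) where
  v : C.V → Q.V
  a : C.A → Q.A
  hs : ∀ b, Q.s (a b) = v (C.s b)
  ht : ∀ b, Q.t (a b) = v (C.t b)

/-- A morphism of quivers is a cover if it is surjective on vertices and arrows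
and induces bijections between the arrows starting (resp. ending) at any vertex `x`
and the arrows starting (resp. ending) at its image. -/
def QuivHom.IsCover {C Q : Quiv} (c : QuivHom C Q) : Prop :=
  Function.Surjective c.v ∧ Function.Surjective c.a ∧
    ∀ x : C.V,
      Set.BijOn c.a {b | C.s b = x} {α | Q.s α = c.v x} ∧
      Set.BijOn c.a {b | C.t b = x} {α | Q.t α = c.v x}

/-- The universal abelian covering quiver of `Q`: vertices `Q₀ × ℤ^{Q₁}`,
arrows `Q₁ × ℤ^{Q₁}`, where the arrow `(α, χ)` goes from `(s α, χ)` to `(t α, χ + α)`. -/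
noncomputable def Quiv.hat (Q : Quiv) : Quiv where
  V := Q.V × (Q.A →₀ ℤ)
  A := Q.A × (Q.A →₀ ℤ)
  s := fun p => (Q.s p.1, p.2)
  t := fun p => (Q.t p.1, p.2 + Finsupp.single p.1 1)

/-- The projection `ĉ : Q̂ → Q`, `(i,χ) ↦ i` on vertices and `(α,χ) ↦ α` on arrows. -/
noncomputable def Quiv.hatHom (Q : Quiv) : QuivHom Q.hat Q where
  v := Prod.fst
  a := Prod.fst
  hs := fun _ => rfl
  ht := fun _ => rfl

/-- The minimal length of a reduced unoriented cycle in a quiver `R`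
(the infimum being `0` if there is none). -/
noncomputable def Quiv.minCycleLength (R : Quiv) : ℕ :=
  sInf {n | ∃ (v : R.V) (l : List R.Step), R.IsWalk v v l ∧ R.Reduced l ∧ l.length = n}

/-!
Take a shortest reduced cycle in `Q̂` and project it to `Q`. Since `Q̂ → Q` is a cover, the
projection is still reduced. Going along a walk in `Q̂` shifts the `ℤ^{Q₁}`-coordinate by the
net number of traversals of each arrow, so along the projected cycle every arrow is traversed
as often forwards as backwards. In particular the first step `α^{±1}` is later followed by
`α^{∓1}`, and the part strictly between them is a reduced cycle in `Q` that is at least two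
steps shorter.
-/

namespace Quiv

variable {Q : Quiv}

lemma isWalk_append_iff {i j : Q.V} {u v : List Q.Step} :
    Q.IsWalk i j (u ++ v) ↔ ∃ k, Q.IsWalk i k u ∧ Q.IsWalk k j v := by
  induction u generalizing i with
  | nil => simp [IsWalk]
  | cons e u ih => simp [IsWalk, ih, and_assoc]

lemma src_opposite (a : Q.A) (b : Bool) : Q.src (a, !b) = Q.tgt (a, b) := by
  cases b <;> rfl

lemma minCycleLength_le {v : Q.V} {l : List Q.Step} (hw : Q.IsWalk v v l) (hr : Q.Reduced l) :
    Q.minCycleLength ≤ l.length :=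
  Nat.sInf_le ⟨v, l, hw, hr, rfl⟩

lemma exists_length_eq_minCycleLength
    (h : ∃ (v : Q.V) (l : List Q.Step), Q.IsWalk v v l ∧ Q.Reduced l) :
    ∃ (v : Q.V) (l : List Q.Step),
      Q.IsWalk v v l ∧ Q.Reduced l ∧ l.length = Q.minCycleLength := by
  obtain ⟨v, l, hw, hr⟩ := h
  exact Nat.sInf_mem (s := {n | ∃ (v : Q.V) (l : List Q.Step),
    Q.IsWalk v v l ∧ Q.Reduced l ∧ l.length = n}) ⟨l.length, v, l, hw, hr, rfl⟩

lemma reduced_cycle_of_opposite_steps {i j : Q.V} {a : Q.A} {b : Bool} {u v : List Q.Step}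
    (hw : Q.IsWalk i j ((a, b) :: u ++ (a, !b) :: v))
    (hc : ((a, b) :: u ++ (a, !b) :: v).IsChain fun e f => ¬(e.1 = f.1 ∧ e.2 = !f.2)) :
    Q.IsWalk (Q.tgt (a, b)) (Q.tgt (a, b)) u ∧ Q.Reduced u := by
  obtain ⟨-, hw⟩ := hw
  obtain ⟨k, hwu, hk, -⟩ := isWalk_append_iff.1 hw
  refine ⟨by rwa [← hk, src_opposite] at hwu, ?_,
    hc.infix ⟨[(a, b)], (a, !b) :: v, by simp⟩⟩
  rintro rfl
  simp at hc

section NetCount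

open scoped Classical

noncomputable def netCount (a : Q.A) (l : List Q.Step) : ℤ :=
  l.count (a, true) - l.count (a, false)

lemma netCount_cons (a : Q.A) (e : Q.Step) (l : List Q.Step) :
    netCount a (e :: l) = (if e.1 = a then (if e.2 then 1 else -1) else 0) + netCount a l := by
  obtain ⟨b, _ | _⟩ := e <;> by_cases hb : b = a <;> simp [netCount, hb] <;> ring

lemma mem_opposite_of_netCount_eq_zero {a : Q.A} {b : Bool} {l : List Q.Step}
    (hm : (a, b) ∈ l) (h0 : netCount a l = 0) : (a, !b) ∈ l := by
  rw [← List.count_pos_iff] at hm ⊢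
  cases b <;> simp only [netCount, Bool.not_false, Bool.not_true] at h0 ⊢ <;> omega

lemma exists_reduced_cycle_lt_length_of_netCount_eq_zero {i j : Q.V} {l : List Q.Step}
    (hw : Q.IsWalk i j l) (hr : Q.Reduced l) (h0 : ∀ a, netCount a l = 0) :
    ∃ (k : Q.V) (u : List Q.Step), Q.IsWalk k k u ∧ Q.Reduced u ∧ u.length < l.length := by
  obtain ⟨⟨a, b⟩, r, rfl⟩ := List.exists_cons_of_ne_nil hr.1
  have hopp : (a, !b) ∈ r := by
    simpa using mem_opposite_of_netCount_eq_zero List.mem_cons_self (h0 a)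
  obtain ⟨u, v, rfl⟩ := List.append_of_mem hopp
  obtain ⟨hwu, hru⟩ := reduced_cycle_of_opposite_steps hw hr.2
  exact ⟨_, u, hwu, hru, by simp⟩

end NetCount

end Quiv

namespace QuivHom

variable {C Q : Quiv} (c : QuivHom C Q)

def mapStep (e : C.Step) : Q.Step := (c.a e.1, e.2)

lemma src_mapStep (e : C.Step) : Q.src (c.mapStep e) = c.v (C.src e) := by
  obtain ⟨b, _ | _⟩ := e
  exacts [c.ht b, c.hs b]

lemma tgt_mapStep (e : C.Step) : Q.tgt (c.mapStep e) = c.v (C.tgt e) := by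
  obtain ⟨b, _ | _⟩ := e
  exacts [c.hs b, c.ht b]

variable {c}

lemma _root_.Quiv.IsWalk.map {i j : C.V} {l : List C.Step} (h : C.IsWalk i j l) :
    Q.IsWalk (c.v i) (c.v j) (l.map c.mapStep) := by
  induction l generalizing i with
  | nil => exact congrArg c.v h
  | cons e l ih =>
    obtain ⟨rfl, hw⟩ := h
    exact ⟨c.src_mapStep e, c.tgt_mapStep e ▸ ih hw⟩

lemma IsCover.eq_of_tgt_eq_src (hc : c.IsCover) {e f : C.Step} (h1 : c.a e.1 = c.a f.1)
    (h2 : e.2 = !f.2) (h : C.tgt e = C.src f) : e.1 = f.1 := by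
  obtain ⟨b, o⟩ := e
  obtain ⟨b', o'⟩ := f
  simp only at h1 h2
  subst h2
  cases o'
  · exact (hc.2.2 (C.t b)).2.injOn rfl h.symm h1
  · exact (hc.2.2 (C.s b)).1.injOn rfl h.symm h1

lemma IsCover.isChain_map (hc : c.IsCover) : ∀ {i j : C.V} {l : List C.Step},
    C.IsWalk i j l → l.IsChain (fun e f => ¬(e.1 = f.1 ∧ e.2 = !f.2)) →
    (l.map c.mapStep).IsChain (fun e f => ¬(e.1 = f.1 ∧ e.2 = !f.2))
  | _, _, [], _, _ => .nil
  | _, _, [_], _, _ => .singleton _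
  | _, _, _ :: _ :: _, ⟨_, hw⟩, hl => by
    rw [List.isChain_cons_cons] at hl
    exact List.isChain_cons_cons.2
      ⟨fun ⟨h1, h2⟩ => hl.1 ⟨hc.eq_of_tgt_eq_src h1 h2 hw.1.symm, h2⟩,
        hc.isChain_map hw hl.2⟩

lemma IsCover.reduced_map (hc : c.IsCover) {i j : C.V} {l : List C.Step}
    (hw : C.IsWalk i j l) (hr : C.Reduced l) : Q.Reduced (l.map c.mapStep) :=
  ⟨by simpa using hr.1, hc.isChain_map hw hr.2⟩

end QuivHom

namespace Quiv

variable (Q : Quiv)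

lemma hatHom_isCover : Q.hatHom.IsCover := by
  refine ⟨fun i => ⟨(i, 0), rfl⟩, fun α => ⟨(α, 0), rfl⟩,
    fun ⟨i, χ⟩ => ⟨⟨?_, ?_, ?_⟩, ⟨?_, ?_, ?_⟩⟩⟩
  · exact fun b hb => congrArg Prod.fst hb
  · rintro ⟨a, x⟩ hb ⟨a', x'⟩ hb' (rfl : a = a')
    exact Prod.ext rfl ((congrArg Prod.snd hb).trans (congrArg Prod.snd hb').symm)
  · exact fun α hα => ⟨(α, χ), show (Q.s α, χ) = (i, χ) by rw [hα]; rfl, rfl⟩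
  · exact fun b hb => congrArg Prod.fst hb
  · rintro ⟨a, x⟩ hb ⟨a', x'⟩ hb' (rfl : a = a')
    exact Prod.ext rfl
      (add_right_cancel ((congrArg Prod.snd hb).trans (congrArg Prod.snd hb').symm))
  · refine fun α hα => ⟨(α, χ - Finsupp.single α 1), ?_, rfl⟩
    show (Q.t α, χ - Finsupp.single α 1 + Finsupp.single α 1) = (i, χ)
    rw [hα, sub_add_cancel]
    rfl

variable {Q}

lemma IsWalk.hat_snd_apply {p q : Q.hat.V} {l : List Q.hat.Step} (h : Q.hat.IsWalk p q l)
    (a : Q.A) : q.2 a = p.2 a + netCount a (l.map Q.hatHom.mapStep) := by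
  induction l generalizing p with
  | nil => subst h; simp [netCount]
  | cons e l ih =>
    obtain ⟨rfl, hw⟩ := h
    rw [ih hw, List.map_cons, netCount_cons, ← add_assoc]
    obtain ⟨⟨b, x⟩, _ | _⟩ := e <;> by_cases hb : b = a <;>
      simp [Quiv.hat, src, tgt, QuivHom.mapStep, hatHom, hb]

end Quiv

/-- If the universal abelian covering quiver `Q̂` contains a reduced
unoriented cycle, then the minimal length of a reduced unoriented cycle in `Q` is
strictly smaller than the minimal length of a reduced unoriented cycle in `Q̂`. -/
theorem stmt4 (Q : Quiv)
    (h : ∃ (v : Q.hat.V) (l : List Q.hat.Step), Q.hat.IsWalk v v l ∧ Q.hat.Reduced l) :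
    Q.minCycleLength < Q.hat.minCycleLength := by
  obtain ⟨v, l, hw, hr, hl⟩ := Quiv.exists_length_eq_minCycleLength h
  have h0 (a : Q.A) : Quiv.netCount a (l.map Q.hatHom.mapStep) = 0 := by
    simpa using hw.hat_snd_apply a
  obtain ⟨k, u, hwu, hru, hlt⟩ :=
    Quiv.exists_reduced_cycle_lt_length_of_netCount_eq_zero hw.map
      (Q.hatHom_isCover.reduced_map hw hr) h0
  calc Q.minCycleLength ≤ u.length := Quiv.minCycleLength_le hwu hru
    _ < Q.hat.minCycleLength := by simpa [hl] using hlt
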